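/- The homogenized plate tensor K*_{22}, defined by (K*_{22})_{αβγδ} = ∫_𝒴 A(e(W^{αβ})−x_d e_α⊗e_β):(e(W^{γδ})−x_d e_γ⊗e_δ), satisfies the two-sided bound: for all symmetric (d-1)×(d-1) matrices τ, (c₋/12) τ:τ ≤ K*_{22} τ : τ ≤ c₊(c₊/c₋ + 1) τ:τ, where c₋ and c₊ are the ellipticity and boundedness constants of A. -/

import Mathlib

/-!
Put `U = e(W^τ)` for `W^τ = τ_{αβ} W^{αβ}` and let `T` be `τ` placed in the planar block, so that
`K*₂₂ τ : τ = ∫_𝒴 A B : B` with `B = U - x_d T`. The planar entries of `U` are derivatives of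
periodic functions in planar directions, so the divergence theorem on the cell gives
`∫_𝒴 x_d U : T = 0`; hence `∫_𝒴 |B|² = ∫_𝒴 |U|² + |τ|² / 12` and ellipticity yields the lower
bound. The corrector equation says `∫_𝒴 A B : U = 0`, so expanding `x_d T = U - B` gives
`∫_𝒴 A B : B = ∫_𝒴 x_d² A T : T - ∫_𝒴 A U : U ≤ c₊ |τ|² / 12`.
-/


open MeasureTheory Real

noncomputable section

/-- Partial derivative of `f` in the coordinate direction `i`. -/
def pd {n : ℕ} (f : (Fin n → ℝ) → ℝ) (i : Fin n) (x : Fin n → ℝ) : ℝ :=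
  fderiv ℝ f x (Pi.single i 1)

/-- The plate-type domain `ω × (-1/2, 1/2)`. -/
def cyl {d : ℕ} (ω : Set (Fin d → ℝ)) : Set (Fin (d + 1) → ℝ) :=
  {x | (fun i : Fin d => x i.castSucc) ∈ ω ∧ x (Fin.last d) ∈ Set.Ioo (-(1:ℝ)/2) (1/2)}

/-- The open unit cube `(0,1)^d`. -/
def unitCube (d : ℕ) : Set (Fin d → ℝ) := Set.univ.pi fun _ => Set.Ioo (0:ℝ) 1

/-- The periodicity cell `𝒴 = (0,1)^d × (-1/2,1/2)`. -/
def cellY (d : ℕ) : Set (Fin (d + 1) → ℝ) := cyl (unitCube d)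

/-- `f` is 1-periodic in each of the first `d` (horizontal) variables. -/
def XPeriodic {d : ℕ} {β : Type*} (f : (Fin (d + 1) → ℝ) → β) : Prop :=
  ∀ (x : Fin (d + 1) → ℝ) (i : Fin d), f (x + Pi.single i.castSucc 1) = f x

/-- Symmetric gradient (strain) of a vector field. -/
def strain {d : ℕ} (u : (Fin (d + 1) → ℝ) → (Fin (d + 1) → ℝ)) (x : Fin (d + 1) → ℝ)
    (i j : Fin (d + 1)) : ℝ :=
  (pd (fun y => u y i) j x + pd (fun y => u y j) i x) / 2

/-- Scaling factors of the scaled strain `e^ε`: `1`, `ε⁻¹` or `ε⁻²` according to the number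
of vertical indices. -/
def escale {d : ℕ} (ε : ℝ) (i j : Fin (d + 1)) : ℝ :=
  if i = Fin.last d then (if j = Fin.last d then ε⁻¹ ^ 2 else ε⁻¹)
  else (if j = Fin.last d then ε⁻¹ else 1)

/-- Squared pointwise (Frobenius) norm of the scaled strain `e^ε(u)`. -/
def strainEpsSq {d : ℕ} (ε : ℝ) (u : (Fin (d + 1) → ℝ) → (Fin (d + 1) → ℝ))
    (x : Fin (d + 1) → ℝ) : ℝ :=
  ∑ i : Fin (d + 1), ∑ j : Fin (d + 1), (escale ε i j * strain u x i j) ^ 2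

/-- Reflection of a point with respect to the midplane `x_d = 0`. -/
def reflV {d : ℕ} (x : Fin (d + 1) → ℝ) : Fin (d + 1) → ℝ :=
  Function.update x (Fin.last d) (-(x (Fin.last d)))

/-- Sign attached to an index: `-1` for the vertical index, `1` otherwise. -/
def vsgn {d : ℕ} (i : Fin (d + 1)) : ℝ := if i = Fin.last d then -1 else 1

/-- The matrix `e_α ⊗ e_β` (planar indices viewed inside `ℝ^{d+1}`). -/
def membM {d : ℕ} (α β : Fin d) (k l : Fin (d + 1)) : ℝ :=
  if k = α.castSucc ∧ l = β.castSucc then 1 else 0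

/-- The usual symmetries of an elasticity tensor:
`A_{ijkl} = A_{jikl} = A_{ijlk} = A_{klij}`. -/
def tensSym {d : ℕ}
    (A : (Fin (d + 1) → ℝ) → Fin (d + 1) → Fin (d + 1) → Fin (d + 1) → Fin (d + 1) → ℝ) :
    Prop :=
  ∀ (x : Fin (d + 1) → ℝ) (i j k l : Fin (d + 1)),
    A x i j k l = A x j i k l ∧ A x i j k l = A x i j l k ∧ A x i j k l = A x k l i j

/-- Uniform ellipticity of the tensor on symmetric matrices: `c₋|ξ|² ≤ ξ : Aξ`. -/
def tensElliptic {d : ℕ}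
    (A : (Fin (d + 1) → ℝ) → Fin (d + 1) → Fin (d + 1) → Fin (d + 1) → Fin (d + 1) → ℝ)
    (cm : ℝ) : Prop :=
  ∀ (x : Fin (d + 1) → ℝ) (ξ : Fin (d + 1) → Fin (d + 1) → ℝ), (∀ i j, ξ i j = ξ j i) →
    cm * (∑ i : Fin (d + 1), ∑ j : Fin (d + 1), (ξ i j) ^ 2)
      ≤ ∑ i : Fin (d + 1), ∑ j : Fin (d + 1), ∑ k : Fin (d + 1), ∑ l : Fin (d + 1),
          ξ i j * A x i j k l * ξ k l

/-- Uniform boundedness of the tensor on symmetric matrices: `|Aξ| ≤ c₊|ξ|`. -/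
def tensBounded {d : ℕ}
    (A : (Fin (d + 1) → ℝ) → Fin (d + 1) → Fin (d + 1) → Fin (d + 1) → Fin (d + 1) → ℝ)
    (cp : ℝ) : Prop :=
  ∀ (x : Fin (d + 1) → ℝ) (ξ : Fin (d + 1) → Fin (d + 1) → ℝ), (∀ i j, ξ i j = ξ j i) →
    ∑ i : Fin (d + 1), ∑ j : Fin (d + 1),
        (∑ k : Fin (d + 1), ∑ l : Fin (d + 1), A x i j k l * ξ k l) ^ 2
      ≤ cp ^ 2 * ∑ i : Fin (d + 1), ∑ j : Fin (d + 1), (ξ i j) ^ 2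

/-- Membrane strain field `e(w^{αβ}) + e_α ⊗ e_β`. -/
def memStrain {d : ℕ} (w : Fin d → Fin d → (Fin (d + 1) → ℝ) → (Fin (d + 1) → ℝ))
    (α β : Fin d) (x : Fin (d + 1) → ℝ) (k l : Fin (d + 1)) : ℝ :=
  strain (w α β) x k l + membM α β k l

/-- Bending strain field `e(W^{αβ}) − x_d e_α ⊗ e_β`. -/
def bendStrain {d : ℕ} (W : Fin d → Fin d → (Fin (d + 1) → ℝ) → (Fin (d + 1) → ℝ))
    (α β : Fin d) (x : Fin (d + 1) → ℝ) (k l : Fin (d + 1)) : ℝ :=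
  strain (W α β) x k l - x (Fin.last d) * membM α β k l

/-- The membrane corrector equations. -/
def MembCorr {d : ℕ}
    (A : (Fin (d + 1) → ℝ) → Fin (d + 1) → Fin (d + 1) → Fin (d + 1) → Fin (d + 1) → ℝ)
    (w : Fin d → Fin d → (Fin (d + 1) → ℝ) → (Fin (d + 1) → ℝ)) : Prop :=
  ∀ (α β : Fin d) (v : (Fin (d + 1) → ℝ) → (Fin (d + 1) → ℝ)),
    ContDiff ℝ 1 v → XPeriodic v →
    (∫ x in cellY d, ∑ i : Fin (d + 1), ∑ j : Fin (d + 1),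
      (∑ k : Fin (d + 1), ∑ l : Fin (d + 1), A x i j k l * memStrain w α β x k l)
        * strain v x i j) = 0

/-- The bending corrector equations. -/
def BendCorr {d : ℕ}
    (A : (Fin (d + 1) → ℝ) → Fin (d + 1) → Fin (d + 1) → Fin (d + 1) → Fin (d + 1) → ℝ)
    (W : Fin d → Fin d → (Fin (d + 1) → ℝ) → (Fin (d + 1) → ℝ)) : Prop :=
  ∀ (α β : Fin d) (v : (Fin (d + 1) → ℝ) → (Fin (d + 1) → ℝ)),
    ContDiff ℝ 1 v → XPeriodic v →
    (∫ x in cellY d, ∑ i : Fin (d + 1), ∑ j : Fin (d + 1),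
      (∑ k : Fin (d + 1), ∑ l : Fin (d + 1), A x i j k l * bendStrain W α β x k l)
        * strain v x i j) = 0

/-- The homogenized membrane tensor `K*₁₁`. -/
def K11 {d : ℕ}
    (A : (Fin (d + 1) → ℝ) → Fin (d + 1) → Fin (d + 1) → Fin (d + 1) → Fin (d + 1) → ℝ)
    (w : Fin d → Fin d → (Fin (d + 1) → ℝ) → (Fin (d + 1) → ℝ)) (α β γ δ : Fin d) : ℝ :=
  ∫ x in cellY d, ∑ i : Fin (d + 1), ∑ j : Fin (d + 1), ∑ k : Fin (d + 1), ∑ l : Fin (d + 1),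
    A x i j k l * memStrain w α β x k l * memStrain w γ δ x i j

/-- The homogenized coupling tensor `K*₁₂`. -/
def K12 {d : ℕ}
    (A : (Fin (d + 1) → ℝ) → Fin (d + 1) → Fin (d + 1) → Fin (d + 1) → Fin (d + 1) → ℝ)
    (w W : Fin d → Fin d → (Fin (d + 1) → ℝ) → (Fin (d + 1) → ℝ)) (α β γ δ : Fin d) : ℝ :=
  ∫ x in cellY d, ∑ i : Fin (d + 1), ∑ j : Fin (d + 1), ∑ k : Fin (d + 1), ∑ l : Fin (d + 1),
    A x i j k l * memStrain w α β x k l * bendStrain W γ δ x i j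

/-- The homogenized bending tensor `K*₂₂`. -/
def K22 {d : ℕ}
    (A : (Fin (d + 1) → ℝ) → Fin (d + 1) → Fin (d + 1) → Fin (d + 1) → Fin (d + 1) → ℝ)
    (W : Fin d → Fin d → (Fin (d + 1) → ℝ) → (Fin (d + 1) → ℝ)) (α β γ δ : Fin d) : ℝ :=
  ∫ x in cellY d, ∑ i : Fin (d + 1), ∑ j : Fin (d + 1), ∑ k : Fin (d + 1), ∑ l : Fin (d + 1),
    A x i j k l * bendStrain W α β x k l * bendStrain W γ δ x i j


open Set

section ElasticForm

variable {ι : Type*} [Fintype ι]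

lemma sum_comm_pairs {M : Type*} [AddCommMonoid M] (f : ι → ι → ι → ι → M) :
    ∑ a, ∑ b, ∑ c, ∑ e, f a b c e = ∑ c, ∑ e, ∑ a, ∑ b, f a b c e :=
  calc ∑ a, ∑ b, ∑ c, ∑ e, f a b c e = ∑ a, ∑ c, ∑ b, ∑ e, f a b c e :=
        Finset.sum_congr rfl fun _ _ => Finset.sum_comm
    _ = ∑ c, ∑ a, ∑ b, ∑ e, f a b c e := Finset.sum_comm
    _ = ∑ c, ∑ e, ∑ a, ∑ b, f a b c e := Finset.sum_congr rfl fun _ _ =>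
        (Finset.sum_congr rfl fun _ _ => Finset.sum_comm).trans Finset.sum_comm

lemma sum_sq_sub_mul (ξ η : ι → ι → ℝ) (t : ℝ) :
    ∑ i, ∑ j, (ξ i j - t * η i j) ^ 2
      = ∑ i, ∑ j, ξ i j ^ 2 - 2 * t * ∑ i, ∑ j, ξ i j * η i j + t ^ 2 * ∑ i, ∑ j, η i j ^ 2 := by
  simp only [sub_sq, Finset.sum_add_distrib, Finset.sum_sub_distrib, Finset.mul_sum]
  congr 1; congr 1
  all_goals exact Finset.sum_congr rfl fun _ _ => Finset.sum_congr rfl fun _ _ => by ring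

def elasticForm (C : ι → ι → ι → ι → ℝ) : LinearMap.BilinForm ℝ (ι → ι → ℝ) :=
  LinearMap.mk₂ ℝ (fun ξ η => ∑ i, ∑ j, ∑ k, ∑ l, C i j k l * ξ k l * η i j)
    (fun _ _ _ => by simp only [Pi.add_apply, mul_add, add_mul, Finset.sum_add_distrib])
    (fun _ _ _ => by
      simp only [Pi.smul_apply, smul_eq_mul, Finset.mul_sum, mul_assoc, mul_left_comm])
    (fun _ _ _ => by simp only [Pi.add_apply, mul_add, Finset.sum_add_distrib])
    (fun _ _ _ => by
      simp only [Pi.smul_apply, smul_eq_mul, Finset.mul_sum, mul_assoc, mul_left_comm])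

lemma elasticForm_apply (C : ι → ι → ι → ι → ℝ) (ξ η : ι → ι → ℝ) :
    elasticForm C ξ η = ∑ i, ∑ j, ∑ k, ∑ l, C i j k l * ξ k l * η i j := rfl

lemma elasticForm_apply' (C : ι → ι → ι → ι → ℝ) (ξ η : ι → ι → ℝ) :
    elasticForm C ξ η = ∑ i, ∑ j, (∑ k, ∑ l, C i j k l * ξ k l) * η i j := by
  simp only [elasticForm_apply, Finset.sum_mul]

lemma elasticForm_comm {C : ι → ι → ι → ι → ℝ} (hC : ∀ i j k l, C i j k l = C k l i j)
    (ξ η : ι → ι → ℝ) : elasticForm C ξ η = elasticForm C η ξ := by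
  rw [elasticForm_apply, elasticForm_apply, sum_comm_pairs]
  refine Finset.sum_congr rfl fun i _ => Finset.sum_congr rfl fun j _ =>
    Finset.sum_congr rfl fun k _ => Finset.sum_congr rfl fun l _ => ?_
  rw [hC]
  ring

lemma elasticForm_sub_smul_self {C : ι → ι → ι → ι → ℝ} (hC : ∀ i j k l, C i j k l = C k l i j)
    (ξ η : ι → ι → ℝ) (t : ℝ) :
    elasticForm C (ξ - t • η) (ξ - t • η)
      = t ^ 2 * elasticForm C η η - elasticForm C ξ ξ + 2 * elasticForm C (ξ - t • η) ξ := by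
  simp only [map_sub, map_smul, LinearMap.sub_apply, LinearMap.smul_apply, smul_eq_mul,
    elasticForm_comm hC η ξ]
  ring

/-- Termwise AM–GM `a b ≤ (a² / c + c b²) / 2` avoids square roots in Cauchy–Schwarz. -/
lemma elasticForm_self_le {C : ι → ι → ι → ι → ℝ} {c : ℝ} (hc : 0 < c) {ξ : ι → ι → ℝ}
    (h : ∑ i, ∑ j, (∑ k, ∑ l, C i j k l * ξ k l) ^ 2 ≤ c ^ 2 * ∑ i, ∑ j, ξ i j ^ 2) :
    elasticForm C ξ ξ ≤ c * ∑ i, ∑ j, ξ i j ^ 2 := by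
  have amgm (a b : ℝ) : a * b ≤ (a ^ 2 / c + c * b ^ 2) / 2 := by
    have := sq_nonneg (a - c * b)
    field_simp
    nlinarith
  calc elasticForm C ξ ξ
      ≤ ∑ i, ∑ j, ((∑ k, ∑ l, C i j k l * ξ k l) ^ 2 / c + c * ξ i j ^ 2) / 2 := by
        rw [elasticForm_apply']
        exact Finset.sum_le_sum fun i _ => Finset.sum_le_sum fun j _ => amgm _ _
    _ = ((∑ i, ∑ j, (∑ k, ∑ l, C i j k l * ξ k l) ^ 2) / c + c * ∑ i, ∑ j, ξ i j ^ 2) / 2 := by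
        simp only [← Finset.sum_div, Finset.sum_add_distrib, Finset.mul_sum]
    _ ≤ (c ^ 2 * (∑ i, ∑ j, ξ i j ^ 2) / c + c * ∑ i, ∑ j, ξ i j ^ 2) / 2 := by
        gcongr
    _ = c * ∑ i, ∑ j, ξ i j ^ 2 := by
        field_simp
        ring

@[fun_prop]
lemma Continuous.elasticForm {X : Type*} [TopologicalSpace X] {C : X → ι → ι → ι → ι → ℝ}
    {ξ η : X → ι → ι → ℝ} (hC : Continuous C) (hξ : Continuous ξ) (hη : Continuous η) :
    Continuous fun x => _root_.elasticForm (C x) (ξ x) (η x) := by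
  simp only [elasticForm_apply]
  fun_prop

end ElasticForm

lemma continuous_pd {n : ℕ} {f : (Fin n → ℝ) → ℝ} (hf : ContDiff ℝ 1 f) (i : Fin n) :
    Continuous (pd f i) :=
  (hf.continuous_fderiv one_ne_zero).clm_apply continuous_const

lemma integral_pd_Icc {n : ℕ} {a b : Fin (n + 1) → ℝ} (hab : a ≤ b) {g : (Fin (n + 1) → ℝ) → ℝ}
    (hg : ContDiff ℝ 1 g) (i : Fin (n + 1)) :
    ∫ x in Icc a b, pd g i x =
      (∫ y in Icc (a ∘ i.succAbove) (b ∘ i.succAbove), g (i.insertNth (b i) y)) -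
        ∫ y in Icc (a ∘ i.succAbove) (b ∘ i.succAbove), g (i.insertNth (a i) y) := by
  have hdiv (x) : ∑ j, (if j = i then fderiv ℝ g x else 0) (Pi.single j 1) = pd g i x :=
    (Finset.sum_eq_single i (fun j _ hj => by simp [hj]) (by simp)).trans (by simp [pd])
  have key := integral_divergence_of_hasFDerivAt_off_countable' a b hab
    (fun j => if j = i then g else 0) (fun j x => if j = i then fderiv ℝ g x else 0) ∅
    countable_empty
    (fun j => by split_ifs <;> [exact hg.continuous.continuousOn; exact continuousOn_const])
    (fun x _ j => by
      split_ifs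
      · exact (hg.differentiable one_ne_zero).differentiableAt.hasFDerivAt
      · exact hasFDerivAt_const 0 x)
    (by simpa only [hdiv] using (continuous_pd hg i).integrableOn_Icc)
  simp only [hdiv] at key
  rw [key, Finset.sum_eq_single i (fun j _ hj => by simp [hj]) (by simp)]
  simp

def cellLower (d : ℕ) : Fin (d + 1) → ℝ := Fin.snoc 0 (-1 / 2)

def cellUpper (d : ℕ) : Fin (d + 1) → ℝ := Fin.snoc 1 (1 / 2)

section Cell

variable {d : ℕ}

lemma cellLower_le_cellUpper : cellLower d ≤ cellUpper d := by
  refine Fin.lastCases ?_ (fun i => ?_) <;> norm_num [cellLower, cellUpper]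

lemma cellY_eq_pi : cellY d = univ.pi fun i => Ioo (cellLower d i) (cellUpper d i) := by
  ext x
  simp [cellY, cyl, unitCube, cellLower, cellUpper, Fin.forall_fin_succ', neg_div]

lemma measurableSet_cellY : MeasurableSet (cellY d) := by
  rw [cellY_eq_pi]
  exact MeasurableSet.univ_pi fun _ => measurableSet_Ioo

lemma cellY_ae_eq_Icc : cellY d =ᵐ[volume] Icc (cellLower d) (cellUpper d) := by
  rw [cellY_eq_pi, volume_pi]
  exact Measure.univ_pi_Ioo_ae_eq_Icc

lemma integrableOn_cellY {f : (Fin (d + 1) → ℝ) → ℝ} (hf : Continuous f) :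
    IntegrableOn f (cellY d) :=
  (hf.integrableOn_Icc (a := cellLower d) (b := cellUpper d)).mono_set <| by
    rw [cellY_eq_pi]
    exact fun x hx => ⟨fun i => (hx i trivial).1.le, fun i => (hx i trivial).2.le⟩

lemma integral_cellY_finsetSum {κ : Type*} (s : Finset κ) {f : κ → (Fin (d + 1) → ℝ) → ℝ}
    (hf : ∀ k, Continuous (f k)) :
    ∫ x in cellY d, ∑ k ∈ s, f k x = ∑ k ∈ s, ∫ x in cellY d, f k x :=
  integral_finsetSum s fun k _ => integrableOn_cellY (hf k)

lemma integral_pd_castSucc_eq_zero {g : (Fin (d + 1) → ℝ) → ℝ} (hg : ContDiff ℝ 1 g)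
    (hper : XPeriodic g) (α : Fin d) : ∫ x in cellY d, pd g α.castSucc x = 0 := by
  rw [setIntegral_congr_set cellY_ae_eq_Icc, integral_pd_Icc cellLower_le_cellUpper hg,
    sub_eq_zero]
  congr 1 with y
  have : (α.castSucc.insertNth (cellUpper d α.castSucc) y : Fin (d + 1) → ℝ)
      = α.castSucc.insertNth (cellLower d α.castSucc) y + Pi.single α.castSucc 1 := by
    ext j
    cases j using α.castSucc.succAboveCases with
    | x => simp [cellLower, cellUpper]
    | p k => simp [α.castSucc.succAbove_ne k]
  rw [this, hper]

lemma integral_lastCoord_sq : ∫ x in cellY d, x (Fin.last d) ^ 2 = 1 / 12 := by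
  have hpd (x : Fin (d + 1) → ℝ) :
      pd (fun x => x (Fin.last d) ^ 3 / 3) (Fin.last d) x = x (Fin.last d) ^ 2 := by
    unfold pd
    simp_rw [div_eq_mul_inv]
    rw [fderiv_mul_const (by fun_prop), fderiv_fun_pow _ (by fun_prop)]
    simp [(hasFDerivAt_apply (Fin.last d) x).fderiv]
  simp_rw [← hpd]
  rw [setIntegral_congr_set cellY_ae_eq_Icc,
    integral_pd_Icc cellLower_le_cellUpper (by fun_prop)]
  simp [cellLower, cellUpper, Measure.real, Real.volume_Icc_pi]
  norm_num

lemma pd_lastCoord_mul {f : (Fin (d + 1) → ℝ) → ℝ} (hf : Differentiable ℝ f)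
    (α : Fin d) (x : Fin (d + 1) → ℝ) :
    pd (fun y => y (Fin.last d) * f y) α.castSucc x = x (Fin.last d) * pd f α.castSucc x := by
  unfold pd
  rw [fderiv_fun_mul (by fun_prop) (hf x)]
  simp [(hasFDerivAt_apply (Fin.last d) x).fderiv, (Fin.castSucc_lt_last α).ne]

lemma XPeriodic.lastCoord_mul {f : (Fin (d + 1) → ℝ) → ℝ} (hf : XPeriodic f) :
    XPeriodic fun y => y (Fin.last d) * f y := fun x α => by
  simp [hf x α, (Fin.castSucc_lt_last α).ne']

lemma XPeriodic.apply {u : (Fin (d + 1) → ℝ) → (Fin (d + 1) → ℝ)} (hu : XPeriodic u)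
    (i : Fin (d + 1)) : XPeriodic fun y => u y i := fun x α => congrFun (hu x α) i

lemma integral_lastCoord_mul_pd_castSucc_eq_zero {f : (Fin (d + 1) → ℝ) → ℝ}
    (hf : ContDiff ℝ 1 f) (hper : XPeriodic f) (α : Fin d) :
    ∫ x in cellY d, x (Fin.last d) * pd f α.castSucc x = 0 := by
  simp_rw [← pd_lastCoord_mul (hf.differentiable one_ne_zero)]
  exact integral_pd_castSucc_eq_zero (by fun_prop) hper.lastCoord_mul α

end Cell

section Strain

variable {d : ℕ}

lemma continuous_strain {u : (Fin (d + 1) → ℝ) → (Fin (d + 1) → ℝ)} (hu : ContDiff ℝ 1 u) :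
    Continuous (strain u) := by
  unfold strain
  have := fun k => continuous_pd (n := d + 1) (f := fun y => u y k) (by fun_prop)
  fun_prop

lemma strain_comm (u : (Fin (d + 1) → ℝ) → (Fin (d + 1) → ℝ)) (x : Fin (d + 1) → ℝ)
    (i j : Fin (d + 1)) : strain u x i j = strain u x j i := by
  unfold strain
  rw [add_comm]

lemma integral_lastCoord_mul_strain_eq_zero {u : (Fin (d + 1) → ℝ) → (Fin (d + 1) → ℝ)}
    (hu : ContDiff ℝ 1 u) (hper : XPeriodic u) (α β : Fin d) :
    ∫ x in cellY d, x (Fin.last d) * strain u x α.castSucc β.castSucc = 0 := by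
  have h (i : Fin (d + 1)) (γ : Fin d) :=
    integral_lastCoord_mul_pd_castSucc_eq_zero (f := fun y => u y i) (by fun_prop)
      (hper.apply i) γ
  have hint (i : Fin (d + 1)) (γ : Fin d) :
      IntegrableOn (fun x => x (Fin.last d) * pd (fun y => u y i) γ.castSucc x) (cellY d) :=
    integrableOn_cellY ((continuous_apply _).mul (continuous_pd (by fun_prop) _))
  simp only [strain, mul_div_assoc', mul_add]
  rw [integral_div, integral_add (hint _ _) (hint _ _), h, h, add_zero, zero_div]

def planarEmbed (τ : Fin d → Fin d → ℝ) (k l : Fin (d + 1)) : ℝ :=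
  ∑ α, ∑ β, τ α β * membM α β k l

lemma planarEmbed_castSucc (τ : Fin d → Fin d → ℝ) (α β : Fin d) :
    planarEmbed τ α.castSucc β.castSucc = τ α β := by
  simp [planarEmbed, membM, ite_and]

lemma planarEmbed_comm {τ : Fin d → Fin d → ℝ} (hτ : ∀ α β, τ α β = τ β α) (k l : Fin (d + 1)) :
    planarEmbed τ k l = planarEmbed τ l k := by
  unfold planarEmbed
  rw [Finset.sum_comm]
  refine Finset.sum_congr rfl fun β _ => Finset.sum_congr rfl fun α _ => ?_
  simp only [membM, hτ α β, and_comm]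

lemma sum_mul_planarEmbed (ξ : Fin (d + 1) → Fin (d + 1) → ℝ) (τ : Fin d → Fin d → ℝ) :
    ∑ k, ∑ l, ξ k l * planarEmbed τ k l = ∑ α, ∑ β, τ α β * ξ α.castSucc β.castSucc := by
  simp [Fin.sum_univ_castSucc, planarEmbed, membM, ite_and, mul_comm,
    (Fin.castSucc_ne_last _).symm]

lemma sum_sq_planarEmbed (τ : Fin d → Fin d → ℝ) :
    ∑ k, ∑ l, planarEmbed τ k l ^ 2 = ∑ α, ∑ β, τ α β ^ 2 := by
  simp only [sq, sum_mul_planarEmbed, planarEmbed_castSucc]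

lemma integral_lastCoord_mul_strain_mul_planarEmbed {u : (Fin (d + 1) → ℝ) → (Fin (d + 1) → ℝ)}
    (hu : ContDiff ℝ 1 u) (hper : XPeriodic u) (τ : Fin d → Fin d → ℝ) :
    ∫ x in cellY d, x (Fin.last d) * ∑ i, ∑ j, strain u x i j * planarEmbed τ i j = 0 := by
  have := continuous_strain hu
  simp only [sum_mul_planarEmbed, Finset.mul_sum]
  simp (disch := fun_prop) only [integral_cellY_finsetSum]
  refine Finset.sum_eq_zero fun α _ => Finset.sum_eq_zero fun β _ => ?_
  simp only [mul_left_comm _ (τ α β), integral_const_mul,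
    integral_lastCoord_mul_strain_eq_zero hu hper, mul_zero]

end Strain

/-- The paper's `W^τ`. -/
def correctorComb {d : ℕ} (W : Fin d → Fin d → (Fin (d + 1) → ℝ) → (Fin (d + 1) → ℝ))
    (τ : Fin d → Fin d → ℝ) (y : Fin (d + 1) → ℝ) : Fin (d + 1) → ℝ :=
  ∑ α, ∑ β, τ α β • W α β y

def bendStrainComb {d : ℕ} (W : Fin d → Fin d → (Fin (d + 1) → ℝ) → (Fin (d + 1) → ℝ))
    (τ : Fin d → Fin d → ℝ) (x : Fin (d + 1) → ℝ) : Fin (d + 1) → Fin (d + 1) → ℝ :=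
  ∑ α, ∑ β, τ α β • bendStrain W α β x

section Corrector

variable {d : ℕ} {W : Fin d → Fin d → (Fin (d + 1) → ℝ) → (Fin (d + 1) → ℝ)}
  {A : (Fin (d + 1) → ℝ) → Fin (d + 1) → Fin (d + 1) → Fin (d + 1) → Fin (d + 1) → ℝ}

lemma contDiff_correctorComb (hW : ∀ α β, ContDiff ℝ 1 (W α β)) (τ : Fin d → Fin d → ℝ) :
    ContDiff ℝ 1 (correctorComb W τ) := by
  unfold correctorComb
  fun_prop

lemma xPeriodic_correctorComb (hW : ∀ α β, XPeriodic (W α β)) (τ : Fin d → Fin d → ℝ) :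
    XPeriodic (correctorComb W τ) := fun x γ => by
  simp only [correctorComb, hW _ _ x γ]

lemma strain_correctorComb (hW : ∀ α β, Differentiable ℝ (W α β)) (τ : Fin d → Fin d → ℝ)
    (x : Fin (d + 1) → ℝ) (k l : Fin (d + 1)) :
    strain (correctorComb W τ) x k l = ∑ α, ∑ β, τ α β * strain (W α β) x k l := by
  have hpd (i j : Fin (d + 1)) : pd (fun y => correctorComb W τ y i) j x
      = ∑ α, ∑ β, τ α β * pd (fun y => W α β y i) j x := by
    simp only [pd, correctorComb, Finset.sum_apply, Pi.smul_apply, smul_eq_mul]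
    simp (disch := fun_prop) only [fderiv_fun_sum, fderiv_const_mul]
    simp
  simp only [strain, hpd, ← Finset.sum_add_distrib, Finset.sum_div]
  exact Finset.sum_congr rfl fun _ _ => Finset.sum_congr rfl fun _ _ => by ring

lemma bendStrainComb_eq (hW : ∀ α β, Differentiable ℝ (W α β)) (τ : Fin d → Fin d → ℝ)
    (x : Fin (d + 1) → ℝ) :
    bendStrainComb W τ x = strain (correctorComb W τ) x - x (Fin.last d) • planarEmbed τ := by
  ext k l
  simp [bendStrainComb, bendStrain, strain_correctorComb hW, planarEmbed, mul_sub,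
    Finset.mul_sum, mul_left_comm]

lemma continuous_bendStrain {α β : Fin d} (hW : ContDiff ℝ 1 (W α β)) :
    Continuous (bendStrain W α β) := by
  have := continuous_strain hW
  unfold bendStrain
  fun_prop

lemma continuous_bendStrainComb (hW : ∀ α β, ContDiff ℝ 1 (W α β)) (τ : Fin d → Fin d → ℝ) :
    Continuous (bendStrainComb W τ) := by
  have := fun α β => continuous_bendStrain (hW α β)
  unfold bendStrainComb
  fun_prop

lemma K22_eq_integral_elasticForm (α β γ δ : Fin d) :
    K22 A W α β γ δ
      = ∫ x in cellY d, elasticForm (A x) (bendStrain W α β x) (bendStrain W γ δ x) := rfl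

lemma sum_mul_K22 (hA : Continuous A) (hW : ∀ α β, ContDiff ℝ 1 (W α β))
    (τ : Fin d → Fin d → ℝ) :
    ∑ α, ∑ β, ∑ γ, ∑ δ, τ α β * τ γ δ * K22 A W α β γ δ
      = ∫ x in cellY d, elasticForm (A x) (bendStrainComb W τ x) (bendStrainComb W τ x) := by
  have := fun α β => continuous_bendStrain (hW α β)
  simp only [bendStrainComb, map_sum, map_smul, LinearMap.sum_apply,
    LinearMap.smul_apply, smul_eq_mul]
  simp (disch := fun_prop) only [integral_cellY_finsetSum, integral_const_mul, Finset.mul_sum]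
  rw [sum_comm_pairs]
  refine Finset.sum_congr rfl fun γ _ => Finset.sum_congr rfl fun δ _ =>
    Finset.sum_congr rfl fun α _ => Finset.sum_congr rfl fun β _ => ?_
  rw [K22_eq_integral_elasticForm]
  ring

lemma integral_elasticForm_bendStrainComb_strain (hA : Continuous A)
    (hW : ∀ α β, ContDiff ℝ 1 (W α β)) (hWper : ∀ α β, XPeriodic (W α β))
    (hWcorr : BendCorr A W) (τ : Fin d → Fin d → ℝ) :
    ∫ x in cellY d, elasticForm (A x) (bendStrainComb W τ x) (strain (correctorComb W τ) x)
      = 0 := by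
  have hU := contDiff_correctorComb hW τ
  have := continuous_strain hU
  have := fun α β => continuous_bendStrain (hW α β)
  simp only [bendStrainComb, map_sum, map_smul, LinearMap.sum_apply, LinearMap.smul_apply,
    smul_eq_mul]
  simp (disch := fun_prop) only [integral_cellY_finsetSum, integral_const_mul]
  refine Finset.sum_eq_zero fun α _ => Finset.sum_eq_zero fun β _ => ?_
  simp only [elasticForm_apply', hWcorr α β _ hU (xPeriodic_correctorComb hWper τ), mul_zero]

end Corrector

section Bounds

variable {d : ℕ} {W : Fin d → Fin d → (Fin (d + 1) → ℝ) → (Fin (d + 1) → ℝ)}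
  {A : (Fin (d + 1) → ℝ) → Fin (d + 1) → Fin (d + 1) → Fin (d + 1) → Fin (d + 1) → ℝ}

lemma tensElliptic.le_elasticForm {cm : ℝ} (h : tensElliptic A cm) (x : Fin (d + 1) → ℝ)
    {ξ : Fin (d + 1) → Fin (d + 1) → ℝ} (hξ : ∀ i j, ξ i j = ξ j i) :
    cm * ∑ i, ∑ j, ξ i j ^ 2 ≤ elasticForm (A x) ξ ξ :=
  (h x ξ hξ).trans_eq <| Finset.sum_congr rfl fun _ _ => Finset.sum_congr rfl fun _ _ =>
    Finset.sum_congr rfl fun _ _ => Finset.sum_congr rfl fun _ _ => by ring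

lemma integral_sum_sq_bendStrainComb (hW : ∀ α β, ContDiff ℝ 1 (W α β))
    (hWper : ∀ α β, XPeriodic (W α β)) (τ : Fin d → Fin d → ℝ) :
    ∫ x in cellY d, ∑ i, ∑ j, bendStrainComb W τ x i j ^ 2
      = (∫ x in cellY d, ∑ i, ∑ j, strain (correctorComb W τ) x i j ^ 2)
        + (∑ α, ∑ β, τ α β ^ 2) / 12 := by
  have hU := contDiff_correctorComb hW τ
  have := continuous_strain hU
  have hnorm (x : Fin (d + 1) → ℝ) : ∑ i, ∑ j, bendStrainComb W τ x i j ^ 2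
      = ∑ i, ∑ j, strain (correctorComb W τ) x i j ^ 2
        - 2 * (x (Fin.last d) * ∑ i, ∑ j, strain (correctorComb W τ) x i j * planarEmbed τ i j)
        + (∑ α, ∑ β, τ α β ^ 2) * x (Fin.last d) ^ 2 := by
    simp only [bendStrainComb_eq (fun α β => (hW α β).differentiable one_ne_zero), Pi.sub_apply,
      Pi.smul_apply, smul_eq_mul, sum_sq_sub_mul, sum_sq_planarEmbed]
    ring
  simp only [hnorm]
  rw [integral_add (integrableOn_cellY (by fun_prop)) (integrableOn_cellY (by fun_prop)),
    integral_sub (integrableOn_cellY (by fun_prop)) (integrableOn_cellY (by fun_prop)),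
    integral_const_mul, integral_const_mul, integral_lastCoord_sq,
    integral_lastCoord_mul_strain_mul_planarEmbed hU (xPeriodic_correctorComb hWper τ)]
  ring

lemma le_integral_elasticForm_bendStrainComb {cm : ℝ} (hcm : 0 ≤ cm) (hA : Continuous A)
    (hAell : tensElliptic A cm) (hW : ∀ α β, ContDiff ℝ 1 (W α β))
    (hWper : ∀ α β, XPeriodic (W α β)) {τ : Fin d → Fin d → ℝ} (hτ : ∀ α β, τ α β = τ β α) :
    cm / 12 * ∑ α, ∑ β, τ α β ^ 2
      ≤ ∫ x in cellY d, elasticForm (A x) (bendStrainComb W τ x) (bendStrainComb W τ x) := by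
  have := continuous_bendStrainComb hW τ
  have hB_comm (x) (i j : Fin (d + 1)) :
      bendStrainComb W τ x i j = bendStrainComb W τ x j i := by
    simp [bendStrainComb_eq (fun α β => (hW α β).differentiable one_ne_zero),
      strain_comm _ x i j, planarEmbed_comm hτ i j]
  have hU_nonneg : 0 ≤ ∫ x in cellY d, ∑ i, ∑ j, strain (correctorComb W τ) x i j ^ 2 :=
    setIntegral_nonneg measurableSet_cellY fun x _ => by positivity
  calc cm / 12 * ∑ α, ∑ β, τ α β ^ 2
      ≤ cm * ∫ x in cellY d, ∑ i, ∑ j, bendStrainComb W τ x i j ^ 2 := by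
        rw [integral_sum_sq_bendStrainComb hW hWper]
        nlinarith
    _ = ∫ x in cellY d, cm * ∑ i, ∑ j, bendStrainComb W τ x i j ^ 2 :=
        (integral_const_mul _ _).symm
    _ ≤ ∫ x in cellY d, elasticForm (A x) (bendStrainComb W τ x) (bendStrainComb W τ x) :=
        setIntegral_mono_on (integrableOn_cellY (by fun_prop)) (integrableOn_cellY (by fun_prop))
          measurableSet_cellY fun x _ => hAell.le_elasticForm x (hB_comm x)

lemma integral_lastCoord_sq_mul_elasticForm_planarEmbed_le {cp : ℝ} (hcp : 0 < cp)
    (hA : Continuous A) (hAbd : tensBounded A cp) {τ : Fin d → Fin d → ℝ}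
    (hτ : ∀ α β, τ α β = τ β α) :
    ∫ x in cellY d, x (Fin.last d) ^ 2 * elasticForm (A x) (planarEmbed τ) (planarEmbed τ)
      ≤ cp / 12 * ∑ α, ∑ β, τ α β ^ 2 := by
  have hT (x : Fin (d + 1) → ℝ) :
      elasticForm (A x) (planarEmbed τ) (planarEmbed τ) ≤ cp * ∑ α, ∑ β, τ α β ^ 2 := by
    rw [← sum_sq_planarEmbed]
    exact elasticForm_self_le hcp (hAbd x _ (planarEmbed_comm hτ))
  calc _ ≤ ∫ x in cellY d, (cp * ∑ α, ∑ β, τ α β ^ 2) * x (Fin.last d) ^ 2 :=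
        setIntegral_mono_on (integrableOn_cellY (by fun_prop))
          (integrableOn_cellY (by fun_prop)) measurableSet_cellY fun x _ => by
            rw [mul_comm _ (x _ ^ 2)]
            exact mul_le_mul_of_nonneg_left (hT x) (sq_nonneg _)
    _ = cp / 12 * ∑ α, ∑ β, τ α β ^ 2 := by
        rw [integral_const_mul, integral_lastCoord_sq]
        ring

lemma integral_elasticForm_bendStrainComb_le {cm cp : ℝ} (hcm : 0 ≤ cm) (hcp : 0 < cp)
    (hA : Continuous A) (hAsym : tensSym A) (hAell : tensElliptic A cm)
    (hAbd : tensBounded A cp) (hW : ∀ α β, ContDiff ℝ 1 (W α β))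
    (hWper : ∀ α β, XPeriodic (W α β)) (hWcorr : BendCorr A W) {τ : Fin d → Fin d → ℝ}
    (hτ : ∀ α β, τ α β = τ β α) :
    ∫ x in cellY d, elasticForm (A x) (bendStrainComb W τ x) (bendStrainComb W τ x)
      ≤ cp / 12 * ∑ α, ∑ β, τ α β ^ 2 := by
  have := continuous_strain (contDiff_correctorComb hW τ)
  have := continuous_bendStrainComb hW τ
  have hpyth (x : Fin (d + 1) → ℝ) :
      elasticForm (A x) (bendStrainComb W τ x) (bendStrainComb W τ x)
        = x (Fin.last d) ^ 2 * elasticForm (A x) (planarEmbed τ) (planarEmbed τ)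
          - elasticForm (A x) (strain (correctorComb W τ) x) (strain (correctorComb W τ) x)
          + 2 * elasticForm (A x) (bendStrainComb W τ x) (strain (correctorComb W τ) x) := by
    rw [bendStrainComb_eq (fun α β => (hW α β).differentiable one_ne_zero)]
    exact elasticForm_sub_smul_self (fun i j k l => (hAsym x i j k l).2.2) _ _ _
  have hU_nonneg : 0 ≤ ∫ x in cellY d,
      elasticForm (A x) (strain (correctorComb W τ) x) (strain (correctorComb W τ) x) :=
    setIntegral_nonneg measurableSet_cellY fun x _ =>
      (by positivity : 0 ≤ cm * _).trans (hAell.le_elasticForm x (strain_comm _ x))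
  simp only [hpyth]
  rw [integral_add (integrableOn_cellY (by fun_prop)) (integrableOn_cellY (by fun_prop)),
    integral_sub (integrableOn_cellY (by fun_prop)) (integrableOn_cellY (by fun_prop)),
    integral_const_mul, integral_elasticForm_bendStrainComb_strain hA hW hWper hWcorr]
  linarith [integral_lastCoord_sq_mul_elasticForm_planarEmbed_le hcp hA hAbd hτ]

end Bounds

theorem statement19_general (d : ℕ) (cm cp : ℝ) (hcm : 0 < cm) (hcp : 0 < cp)
    (A : (Fin (d + 1) → ℝ) → Fin (d + 1) → Fin (d + 1) → Fin (d + 1) → Fin (d + 1) → ℝ)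
    (hAc : Continuous A)
    (hAsym : tensSym A) (hAell : tensElliptic A cm) (hAbd : tensBounded A cp)
    (W : Fin d → Fin d → (Fin (d + 1) → ℝ) → (Fin (d + 1) → ℝ))
    (hW : ∀ α β, ContDiff ℝ 1 (W α β))
    (hWper : ∀ α β, XPeriodic (W α β))
    (hWcorr : BendCorr A W) :
    ∀ τ : Fin d → Fin d → ℝ, (∀ α β, τ α β = τ β α) →
      (cm / 12) * (∑ α : Fin d, ∑ β : Fin d, (τ α β) ^ 2)
          ≤ (∑ α : Fin d, ∑ β : Fin d, ∑ γ : Fin d, ∑ δ : Fin d,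
              τ α β * τ γ δ * K22 A W α β γ δ)
      ∧ (∑ α : Fin d, ∑ β : Fin d, ∑ γ : Fin d, ∑ δ : Fin d,
              τ α β * τ γ δ * K22 A W α β γ δ)
          ≤ cp * (cp / cm + 1) * (∑ α : Fin d, ∑ β : Fin d, (τ α β) ^ 2) := by
  intro τ hτ
  rw [sum_mul_K22 hAc hW τ]
  refine ⟨le_integral_elasticForm_bendStrainComb hcm.le hAc hAell hW hWper hτ, ?_⟩
  have hτ_nonneg : 0 ≤ ∑ α, ∑ β, τ α β ^ 2 := by positivity
  calc _ ≤ cp / 12 * ∑ α, ∑ β, τ α β ^ 2 :=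
        integral_elasticForm_bendStrainComb_le hcm.le hcp hAc hAsym hAell hAbd hW hWper hWcorr hτ
    _ ≤ cp * (cp / cm + 1) * ∑ α, ∑ β, τ α β ^ 2 := by
        have : 0 ≤ cp / cm := by positivity
        gcongr
        nlinarith

/-- Two-sided bound on the homogenized bending tensor:
`(c₋/12) τ:τ ≤ K*₂₂ τ : τ ≤ c₊(c₊/c₋ + 1) τ:τ` for all symmetric planar matrices `τ`. -/
theorem statement19 (d : ℕ) (cm cp : ℝ) (hcm : 0 < cm) (hcp : 0 < cp)
    (A : (Fin (d + 1) → ℝ) → Fin (d + 1) → Fin (d + 1) → Fin (d + 1) → Fin (d + 1) → ℝ)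
    (hAc : Continuous A) (hAper : XPeriodic A)
    (hAsym : tensSym A) (hAell : tensElliptic A cm) (hAbd : tensBounded A cp)
    (W : Fin d → Fin d → (Fin (d + 1) → ℝ) → (Fin (d + 1) → ℝ))
    (hW : ∀ α β, ContDiff ℝ 1 (W α β))
    (hWper : ∀ α β, XPeriodic (W α β))
    (hWmean : ∀ (α β : Fin d) (i : Fin (d + 1)), (∫ x in cellY d, W α β x i) = 0)
    (hWint : ∀ α β, Integrable
        (fun x => ∑ i : Fin (d + 1), ∑ j : Fin (d + 1), (strain (W α β) x i j) ^ 2)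
        (volume.restrict (cellY d)))
    (hWcorr : BendCorr A W) :
    ∀ τ : Fin d → Fin d → ℝ, (∀ α β, τ α β = τ β α) →
      (cm / 12) * (∑ α : Fin d, ∑ β : Fin d, (τ α β) ^ 2)
          ≤ (∑ α : Fin d, ∑ β : Fin d, ∑ γ : Fin d, ∑ δ : Fin d,
              τ α β * τ γ δ * K22 A W α β γ δ)
      ∧ (∑ α : Fin d, ∑ β : Fin d, ∑ γ : Fin d, ∑ δ : Fin d,
              τ α β * τ γ δ * K22 A W α β γ δ)
          ≤ cp * (cp / cm + 1) * (∑ α : Fin d, ∑ β : Fin d, (τ α β) ^ 2) :=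
  statement19_general d cm cp hcm hcp A hAc hAsym hAell hAbd W hW hWper hWcorr
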